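/- Let G : [R, ∞) → ℝ be a nonnegative differentiable function and C > 0. If for all r ≥ R we have G(r) ≤ -C √r · G'(r), then there exist constants c > 0 and r₀ ≥ R such that G(r) ≤ exp(-c √r) for all r ≥ r₀. -/
import Mathlib


open Real

theorem stmt_0 (R C : ℝ) (hR : 0 < R) (hC : 0 < C) (G : ℝ → ℝ)
    (hdiff : ∀ r ≥ R, DifferentiableAt ℝ G r)
    (hpos : ∀ r ≥ R, 0 ≤ G r)
    (hineq : ∀ r ≥ R, G r ≤ -C * Real.sqrt r * deriv G r) :
    ∃ c > 0, ∃ r₀ ≥ R, ∀ r ≥ r₀, G r ≤ Real.exp (-c * Real.sqrt r) := by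
  set a : ℝ := 2 / C with ha_def
  have ha : 0 < a := by positivity
  set H : ℝ → ℝ := fun r => G r * Real.exp (a * Real.sqrt r) with hH_def
  have key : ∀ r ≥ R, HasDerivAt H
      (deriv G r * Real.exp (a * Real.sqrt r)
        + G r * (Real.exp (a * Real.sqrt r) * (a * (1 / (2 * Real.sqrt r))))) r := by
    intro r hr
    have hr0 : 0 < r := lt_of_lt_of_le hR hr
    have h1 : HasDerivAt G (deriv G r) r := (hdiff r hr).hasDerivAt
    have h2 : HasDerivAt Real.sqrt (1 / (2 * Real.sqrt r)) r :=
      Real.hasDerivAt_sqrt hr0.ne'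
    have h3 : HasDerivAt (fun x => a * Real.sqrt x) (a * (1 / (2 * Real.sqrt r))) r :=
      h2.const_mul a
    have h4 : HasDerivAt (fun x => Real.exp (a * Real.sqrt x))
        (Real.exp (a * Real.sqrt r) * (a * (1 / (2 * Real.sqrt r)))) r := h3.exp
    exact h1.mul h4
  have hDnonpos : ∀ r ≥ R,
      deriv G r * Real.exp (a * Real.sqrt r)
        + G r * (Real.exp (a * Real.sqrt r) * (a * (1 / (2 * Real.sqrt r)))) ≤ 0 := by
    intro r hr
    have hr0 : 0 < r := lt_of_lt_of_le hR hr
    have hs : 0 < Real.sqrt r := Real.sqrt_pos.mpr hr0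
    have he : 0 < Real.exp (a * Real.sqrt r) := Real.exp_pos _
    have h3 : deriv G r + G r / (C * Real.sqrt r) ≤ 0 := by
      have hdiv : G r / (C * Real.sqrt r) ≤ -deriv G r := by
        rw [div_le_iff₀ (by positivity)]
        nlinarith [hineq r hr]
      linarith
    have heq : deriv G r * Real.exp (a * Real.sqrt r)
        + G r * (Real.exp (a * Real.sqrt r) * (a * (1 / (2 * Real.sqrt r))))
        = Real.exp (a * Real.sqrt r) * (deriv G r + G r / (C * Real.sqrt r)) := by
      rw [ha_def]
      field_simp
    rw [heq]
    exact mul_nonpos_of_nonneg_of_nonpos he.le h3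
  have hanti : AntitoneOn H (Set.Ici R) := by
    apply antitoneOn_of_deriv_nonpos (convex_Ici R)
    · intro x hx
      exact ((key x hx).differentiableAt).continuousAt.continuousWithinAt
    · rw [interior_Ici]
      intro x hx
      exact ((key x (le_of_lt hx)).differentiableAt).differentiableWithinAt
    · rw [interior_Ici]
      intro x hx
      rw [(key x (le_of_lt hx)).deriv]
      exact hDnonpos x (le_of_lt hx)
  set K : ℝ := G R * Real.exp (a * Real.sqrt R) with hK_def
  have hK0 : 0 ≤ K := mul_nonneg (hpos R le_rfl) (Real.exp_pos _).le
  refine ⟨a / 2, by positivity, max R ((2 / a * Real.log (K + 1))^2),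
    le_max_left _ _, ?_⟩
  intro r hr
  have hrR : R ≤ r := le_trans (le_max_left _ _) hr
  have hr0 : 0 < r := lt_of_lt_of_le hR hrR
  have hHle : H r ≤ K := hanti Set.self_mem_Ici hrR hrR
  have he : 0 < Real.exp (a * Real.sqrt r) := Real.exp_pos _
  have hGle : G r ≤ K * Real.exp (-(a * Real.sqrt r)) := by
    rw [Real.exp_neg]
    calc G r = (G r * Real.exp (a * Real.sqrt r)) * (Real.exp (a * Real.sqrt r))⁻¹ := by
          field_simp
      _ ≤ K * (Real.exp (a * Real.sqrt r))⁻¹ :=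
          mul_le_mul_of_nonneg_right hHle (inv_nonneg.mpr he.le)
  have hlogK : 0 ≤ Real.log (K + 1) := Real.log_nonneg (by linarith)
  have hsq : 2 / a * Real.log (K + 1) ≤ Real.sqrt r := by
    have h1 : (2 / a * Real.log (K + 1)) ^ 2 ≤ r := le_trans (le_max_right _ _) hr
    have h2 := Real.sqrt_le_sqrt h1
    rwa [Real.sqrt_sq (by positivity)] at h2
  have hKle : K ≤ Real.exp (a / 2 * Real.sqrt r) := by
    have h3 : Real.log (K + 1) ≤ a / 2 * Real.sqrt r := by
      have h2 := mul_le_mul_of_nonneg_left hsq (by positivity : (0:ℝ) ≤ a / 2)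
      calc Real.log (K + 1) = a / 2 * (2 / a * Real.log (K + 1)) := by field_simp
        _ ≤ a / 2 * Real.sqrt r := h2
    calc K ≤ K + 1 := by linarith
      _ = Real.exp (Real.log (K + 1)) := (Real.exp_log (by linarith)).symm
      _ ≤ _ := Real.exp_le_exp.mpr h3
  calc G r ≤ K * Real.exp (-(a * Real.sqrt r)) := hGle
    _ ≤ Real.exp (a / 2 * Real.sqrt r) * Real.exp (-(a * Real.sqrt r)) :=
        mul_le_mul_of_nonneg_right hKle (Real.exp_pos _).le
    _ = Real.exp (-(a / 2) * Real.sqrt r) := by rw [← Real.exp_add]; congr 1; ring
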